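/- arXiv:1207.0869 — 3 statements merged into one kernel-verified Lean document; each statement's English description precedes it below -/
import Mathlib

section
/- If ▷ preserves nonemptiness of optimal feasible solutions (y ▷ y' and FO(y') ≠ ∅ implies FO(y) ≠ ∅), and in every nonempty frontier set every dominated element is dominated by some undominated element, then restricting the search recursion to undominated children preserves non-triviality: if FO(y) ≠ ∅ then GO(y) ≠ ∅. -/
/-!
Induct along the split relation. An optimal feasible solution of `y` is either a base solution
of `y` or lies in a child `yy`, where it is still optimal; by the covering hypothesis some
undominated child (`yy` itself or a child dominating it) then has an optimal feasible solution,
so by induction its `GO` is nonempty. Hence the candidate set defining `GO y` is nonempty, and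
since it lies inside `F y`, its costs are bounded below by the optimum of `F y`; a nonempty set
of integers bounded below has a least element.
-/

def opt {Z : Type*} (c : Z → ℤ) (S : Set Z) : Set Z :=
  {z ∈ S | ∀ z' ∈ S, c z ≤ c z'}

section Opt

variable {Z : Type*} (c : Z → ℤ)

theorem mem_opt_of_subset {S T : Set Z} {z : Z} (hST : S ⊆ T) (hz : z ∈ opt c T) (hzS : z ∈ S) :
    z ∈ opt c S :=
  ⟨hzS, fun w hw => hz.2 w (hST hw)⟩

theorem opt_nonempty_of_subset {S T : Set Z} (hST : S ⊆ T) (hT : (opt c T).Nonempty)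
    (hS : S.Nonempty) : (opt c S).Nonempty := by
  obtain ⟨t, -, ht⟩ := hT
  obtain ⟨s, hs⟩ := hS
  obtain ⟨m, ⟨z, hzS, rfl⟩, hmin⟩ := Int.exists_least_of_bdd (P := fun n => ∃ z ∈ S, c z = n)
    ⟨c t, fun _ ⟨w, hw, hcw⟩ => hcw ▸ ht w (hST hw)⟩ ⟨c s, s, hs, rfl⟩
  exact ⟨z, hzS, fun w hw => hmin (c w) ⟨w, hw, rfl⟩⟩

end Opt

section Recursion

variable {Rhat Z : Type*} {split : Rhat → Rhat → Prop} {chi : Rhat → Z → Prop} {o : Z → Prop}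
  {F : Rhat → Set Z}

theorem F_subset_of_split (hF : ∀ y, F y = {z | chi y z ∧ o z} ∪ ⋃ yy ∈ {yy | split y yy}, F yy)
    {y yy : Rhat} (h : split y yy) : F yy ⊆ F y := by
  rw [hF y]
  exact fun _ hz => Or.inr (Set.mem_biUnion h hz)

theorem candidates_subset_F
    (hF : ∀ y, F y = {z | chi y z ∧ o z} ∪ ⋃ yy ∈ {yy | split y yy}, F yy)
    {undom : Rhat → Set Rhat} (hundom : ∀ y, undom y ⊆ {yy | split y yy}) {GO : Rhat → Set Z}
    {y : Rhat} (h : ∀ yy ∈ undom y, GO yy ⊆ F yy) :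
    {z | chi y z ∧ o z} ∪ ⋃ yy ∈ undom y, GO yy ⊆ F y := by
  rintro z (hbase | hchild)
  · rw [hF y]
    exact Or.inl hbase
  · obtain ⟨yy, hyy, hz⟩ := Set.mem_iUnion₂.mp hchild
    exact F_subset_of_split hF (hundom y hyy) (h yy hyy hz)

theorem GO_subset_F (hwf : WellFounded (fun yy y => split y yy)) (c : Z → ℤ)
    (hF : ∀ y, F y = {z | chi y z ∧ o z} ∪ ⋃ yy ∈ {yy | split y yy}, F yy)
    {undom : Rhat → Set Rhat} (hundom : ∀ y, undom y ⊆ {yy | split y yy}) {GO : Rhat → Set Z}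
    (hGO : ∀ y, GO y = opt c ({z | chi y z ∧ o z} ∪ ⋃ yy ∈ undom y, GO yy)) (y : Rhat) :
    GO y ⊆ F y := by
  induction y using hwf.induction with
  | _ y ih =>
    rw [hGO y]
    exact fun _ hz => candidates_subset_F hF hundom (fun yy hyy => ih yy (hundom y hyy)) hz.1

end Recursion

theorem GO_nontrivial_general {Rhat Z : Type*}
    (split : Rhat → Rhat → Prop)          -- y ⋔ yy : yy is a subspace of y
    (hwf : WellFounded (fun yy y => split y yy))
    (dom : Rhat → Rhat → Prop)            -- dominance y ▷ y'
    (chi : Rhat → Z → Prop) (o : Z → Prop) (c : Z → ℤ)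
    (F : Rhat → Set Z)                    -- feasible solutions contained in a space
    (undom : Rhat → Set Rhat)
    (GO : Rhat → Set Z)
    (hundom : ∀ y, undom y ⊆ {yy | split y yy})
    (hGO : ∀ y, GO y = opt c ({z | chi y z ∧ o z} ∪ ⋃ yy ∈ undom y, GO yy))
    (hF : ∀ y, F y = {z | chi y z ∧ o z} ∪ ⋃ yy ∈ {yy | split y yy}, F yy)
    -- ▷ preserves nonemptiness of optimal feasible solutions
    (hdomFO : ∀ y y', dom y y' → (opt c (F y')).Nonempty → (opt c (F y)).Nonempty)
    -- every child with feasible solutions is undominated or dominated by an undominated child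
    (hcover : ∀ y yy, split y yy → (F yy).Nonempty →
      yy ∈ undom y ∨ ∃ yy' ∈ undom y, dom yy' yy) :
    ∀ y, (opt c (F y)).Nonempty → (GO y).Nonempty := by
  intro y
  induction y using hwf.induction with
  | _ y ih =>
    rintro ⟨zs, hzs⟩
    rw [hGO y]
    refine opt_nonempty_of_subset c (candidates_subset_F hF hundom fun yy _ =>
      GO_subset_F hwf c hF hundom hGO yy) ⟨zs, hzs⟩ ?_
    have hzF := hzs.1
    rw [hF y] at hzF
    rcases hzF with hbase | hchild
    · exact ⟨zs, Or.inl hbase⟩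
    obtain ⟨yy, hyy, hzyy⟩ := Set.mem_iUnion₂.mp hchild
    have hoptyy : (opt c (F yy)).Nonempty :=
      ⟨zs, mem_opt_of_subset c (F_subset_of_split hF hyy) hzs hzyy⟩
    obtain ⟨yy', hyy', hopt'⟩ : ∃ yy' ∈ undom y, (opt c (F yy')).Nonempty := by
      rcases hcover y yy hyy ⟨zs, hzyy⟩ with hund | ⟨yy', hyy', hdom⟩
      · exact ⟨yy, hund, hoptyy⟩
      · exact ⟨yy', hyy', hdomFO yy' yy hdom hoptyy⟩
    obtain ⟨z, hz⟩ := ih yy' (hundom y hyy') hopt'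
    exact ⟨z, Or.inr (Set.mem_biUnion hyy' hz)⟩

/-- Non-triviality of the dominance-pruned recurrence `GO`. -/
theorem GO_nontrivial {Rhat Z : Type*}
    (split : Rhat → Rhat → Prop)          -- y ⋔ yy : yy is a subspace of y
    (hwf : WellFounded (fun yy y => split y yy))
    (dom : Rhat → Rhat → Prop)            -- dominance y ▷ y'
    (chi : Rhat → Z → Prop) (o : Z → Prop) (c : Z → ℤ)
    (F : Rhat → Set Z)                    -- feasible solutions contained in a space
    (undom : Rhat → Set Rhat)
    (GO : Rhat → Set Z)
    (hundom : ∀ y, undom y ⊆ {yy | split y yy})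
    (hGO : ∀ y, GO y = opt c ({z | chi y z ∧ o z} ∪ ⋃ yy ∈ undom y, GO yy))
    (hF : ∀ y, F y = {z | chi y z ∧ o z} ∪ ⋃ yy ∈ {yy | split y yy}, F yy)
    -- dominance property: a dominating space matches any feasible solution with a cheaper one
    (hdom : ∀ y y', dom y y' → ∀ z' ∈ F y', ∃ z ∈ F y, c z ≤ c z')
    -- ▷ preserves nonemptiness of optimal feasible solutions
    (hdomFO : ∀ y y', dom y y' → (opt c (F y')).Nonempty → (opt c (F y)).Nonempty)
    -- every child with feasible solutions is undominated or dominated by an undominated child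
    (hcover : ∀ y yy, split y yy → (F yy).Nonempty →
      yy ∈ undom y ∨ ∃ yy' ∈ undom y, dom yy' yy) :
    ∀ y, (opt c (F y)).Nonempty → (GO y).Nonempty :=
  GO_nontrivial_general split hwf dom chi o c F undom GO hundom hGO hF hdomFO hcover
end

section
/- If p and p' are both contiguous paths from s ending at the same node, and the total weight of p is at most the total weight of p', then for any extension e making p' ++ e a path from s to f, p ++ e is a path from s to f with total weight at most that of p' ++ e. Hence p dominates p' for the single-pair shortest path problem. -/
structure Edge where
  src : ℕ
  tgt : ℕ
  w : ℕ

def IsPath : List Edge → ℕ → ℕ → Prop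
  | [], s, f => s = f
  | e :: p, s, f => e.src = s ∧ IsPath p e.tgt f

def cost (p : List Edge) : ℕ := (p.map Edge.w).sum

namespace IsPath

theorem append {p q : List Edge} {s m f : ℕ} (hp : IsPath p s m) (hq : IsPath q m f) :
    IsPath (p ++ q) s f := by
  induction p generalizing s with
  | nil => cases hp; exact hq
  | cons e t ih => exact ⟨hp.1, ih hp.2⟩

theorem of_append {p q : List Edge} {s m f : ℕ} (hp : IsPath p s m)
    (h : IsPath (p ++ q) s f) : IsPath q m f := by
  induction p generalizing s with
  | nil => cases hp; exact h
  | cons e t ih => exact ih hp.2 h.2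

end IsPath

theorem cost_append (p q : List Edge) : cost (p ++ q) = cost p + cost q := by
  simp only [cost, List.map_append, List.sum_append]

theorem shortest_path_dominance (p p' : List Edge) (s n : ℕ)
    (hp : IsPath p s n) (hp' : IsPath p' s n)
    (hc : cost p ≤ cost p') :
    ∀ (e : List Edge) (f : ℕ), IsPath (p' ++ e) s f →
      IsPath (p ++ e) s f ∧ cost (p ++ e) ≤ cost (p' ++ e) := by
  intro e f h
  have he : IsPath e n f := hp'.of_append h
  refine ⟨hp.append he, ?_⟩
  rw [cost_append, cost_append]
  exact Nat.add_le_add_right hc (cost e)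
end

section
/- Dijkstra greedy dominance: let G be a weighted graph with nonnegative edge weights, s a source node, and d(v) the shortest-path distance from s to v. If e = (u,v) is an edge minimizing d(u) + w(e) over all edges leaving the set S of already-settled vertices (s ∈ S, and d is realized within S), then d(v) = d(u) + w(e); i.e., no path to v passing through any other boundary edge e' can be shorter. -/
/-!
A path from `s ∈ S` to `v ∉ S` must cross the boundary of `S` along some edge `(u', v')`, and its
prefix up to `u'` already costs at least `d(u')`; so its total cost is at least
`d(u') + w(u', v') ≥ d(u) + w(u, v)`. Conversely, relaxing the edge `(u, v)` gives
`d(v) ≤ d(u) + w(u, v)`, since the infimum defining `d(u)` is attained in the well-order `ℕ∞`.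
-/

/-- Contiguous directed path along a list of (src, tgt) edges. -/
def DPath : List (ℕ × ℕ) → ℕ → ℕ → Prop
  | [], s, f => s = f
  | e :: p, s, f => e.1 = s ∧ DPath p e.2 f

def pcost (w : ℕ × ℕ → ℕ) (p : List (ℕ × ℕ)) : ℕ := (p.map w).sum

/-- Shortest-path distance from `s` to `v` in edge set `E` (∞ if unreachable). -/
noncomputable def dist (E : Set (ℕ × ℕ)) (w : ℕ × ℕ → ℕ) (s v : ℕ) : ℕ∞ :=
  sInf {c : ℕ∞ | ∃ p : List (ℕ × ℕ), (∀ a ∈ p, a ∈ E) ∧ DPath p s v ∧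
    c = (pcost w p : ℕ∞)}

section ShortestPaths

variable {E : Set (ℕ × ℕ)} {w : ℕ × ℕ → ℕ} {S : Set ℕ} {s u v : ℕ}

theorem DPath.append {p₁ p₂ : List (ℕ × ℕ)} {m : ℕ} (h₁ : DPath p₁ s m) (h₂ : DPath p₂ m v) :
    DPath (p₁ ++ p₂) s v := by
  induction p₁ generalizing s with
  | nil => exact (show s = m from h₁) ▸ h₂
  | cons e p ih => exact ⟨h₁.1, ih h₁.2⟩

theorem DPath.exists_exit_edge {p : List (ℕ × ℕ)} (hp : DPath p s v) (hs : s ∈ S) (hv : v ∉ S) :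
    ∃ p₁ u' v' p₂, p = p₁ ++ (u', v') :: p₂ ∧ DPath p₁ s u' ∧ u' ∈ S ∧ v' ∉ S := by
  induction p generalizing s with
  | nil => exact absurd ((show s = v from hp) ▸ hs) hv
  | cons e p ih =>
    obtain ⟨rfl, hp⟩ := hp
    by_cases he : e.2 ∈ S
    · obtain ⟨p₁, u', v', p₂, rfl, hp₁, hu', hv'⟩ := ih hp he
      exact ⟨e :: p₁, u', v', p₂, rfl, ⟨rfl, hp₁⟩, hu', hv'⟩
    · exact ⟨[], e.1, e.2, p, rfl, rfl, hs, he⟩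

theorem pcost_append (p₁ p₂ : List (ℕ × ℕ)) : pcost w (p₁ ++ p₂) = pcost w p₁ + pcost w p₂ := by
  simp [pcost]

theorem dist_le_pcost {p : List (ℕ × ℕ)} (hE : ∀ a ∈ p, a ∈ E) (hp : DPath p s v) :
    dist E w s v ≤ pcost w p :=
  sInf_le ⟨p, hE, hp, rfl⟩

theorem dist_le_dist_add_of_mem (huv : (u, v) ∈ E) :
    dist E w s v ≤ dist E w s u + w (u, v) := by
  rcases Set.eq_empty_or_nonempty
    {c : ℕ∞ | ∃ p, (∀ a ∈ p, a ∈ E) ∧ DPath p s u ∧ c = (pcost w p : ℕ∞)} with h | h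
  · rw [show _root_.dist E w s u = ⊤ by rw [_root_.dist, h, sInf_empty], top_add]
    exact le_top
  · obtain ⟨p, hE, hp, hc⟩ := csInf_mem h
    have hE' : ∀ a ∈ p ++ [(u, v)], a ∈ E := by
      simp only [List.mem_append, List.mem_singleton]
      rintro a (ha | rfl)
      exacts [hE a ha, huv]
    calc dist E w s v ≤ pcost w (p ++ [(u, v)]) := dist_le_pcost hE' (hp.append ⟨rfl, rfl⟩)
      _ = dist E w s u + w (u, v) := by rw [_root_.dist, hc, pcost_append]; simp [pcost]

theorem le_dist_of_forall_exit_edge {a : ℕ∞} (hs : s ∈ S) (hv : v ∉ S)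
    (h : ∀ u' v', (u', v') ∈ E → u' ∈ S → v' ∉ S → a ≤ dist E w s u' + w (u', v')) :
    a ≤ dist E w s v := by
  refine le_sInf ?_
  rintro _ ⟨p, hE, hp, rfl⟩
  obtain ⟨p₁, u', v', p₂, rfl, hp₁, hu', hv'⟩ := hp.exists_exit_edge hs hv
  have hE₁ : ∀ a ∈ p₁, a ∈ E := fun a ha => hE a (by simp [ha])
  calc a ≤ dist E w s u' + w (u', v') := h u' v' (hE _ (by simp)) hu' hv'
    _ ≤ pcost w p₁ + w (u', v') := by gcongr; exact dist_le_pcost hE₁ hp₁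
    _ ≤ pcost w (p₁ ++ (u', v') :: p₂) := by
      rw [pcost_append]; push_cast [pcost]; gcongr; exact le_self_add

end ShortestPaths

theorem dijkstra_greedy_general (E : Set (ℕ × ℕ)) (w : ℕ × ℕ → ℕ)
    (s : ℕ) (S : Set ℕ) (hsS : s ∈ S)
    (u v : ℕ) (huv : (u, v) ∈ E) (hvS : v ∉ S)
    -- (u,v) minimizes d(u) + w(e) over all edges leaving S
    (hmin : ∀ u' v' : ℕ, (u', v') ∈ E → u' ∈ S → v' ∉ S →
      dist E w s u + (w (u, v) : ℕ∞) ≤ dist E w s u' + (w (u', v') : ℕ∞)) :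
    dist E w s v = dist E w s u + (w (u, v) : ℕ∞) :=
  le_antisymm (dist_le_dist_add_of_mem huv) (le_dist_of_forall_exit_edge hsS hvS hmin)

theorem dijkstra_greedy (E : Set (ℕ × ℕ)) (w : ℕ × ℕ → ℕ)
    (s : ℕ) (S : Set ℕ) (hsS : s ∈ S)
    -- d is realized within S: each settled vertex has a shortest path inside S
    (hrealized : ∀ u ∈ S, ∃ p : List (ℕ × ℕ), (∀ a ∈ p, a ∈ E) ∧ DPath p s u ∧
      (∀ a ∈ p, a.1 ∈ S ∧ a.2 ∈ S) ∧ (pcost w p : ℕ∞) = dist E w s u)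
    (u v : ℕ) (huv : (u, v) ∈ E) (huS : u ∈ S) (hvS : v ∉ S)
    -- (u,v) minimizes d(u) + w(e) over all edges leaving S
    (hmin : ∀ u' v' : ℕ, (u', v') ∈ E → u' ∈ S → v' ∉ S →
      dist E w s u + (w (u, v) : ℕ∞) ≤ dist E w s u' + (w (u', v') : ℕ∞)) :
    dist E w s v = dist E w s u + (w (u, v) : ℕ∞) :=
  dijkstra_greedy_general E w s S hsS u v huv hvS hmin
end
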